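/- Let E be a real inner product space, let u, u₁, …, uₙ be elements of E, and let σ > 0. Let K be the n×n real matrix with entries K i j = ⟪uᵢ, uⱼ⟫, let κ ∈ ℝⁿ have entries κ i = ⟪uᵢ, u⟫, let w = (K + σ²·I)⁻¹ κ, and set σ*² = ⟪u, u⟫ − κᵀ (K + σ²·I)⁻¹ κ. Let f ∈ E and B > 0 with ‖f‖ ≤ B. Then |(∑ᵢ wᵢ ⟪f, uᵢ⟫) − ⟪f, u⟫| ≤ B · √(σ*²). -/

import Mathlib

open Matrix
open scoped RealInnerProductSpace

/-!
Put `S = ∑ i, wᵢ uᵢ`, so that the error is `⟪f, S - u⟫` and Cauchy–Schwarz bounds it by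
`B ‖S - u‖`. Since `w` solves the regularised normal equations `(K + σ² I) w = κ`, we get
`w ⬝ᵥ κ = ⟪S, u⟫` and `w ⬝ᵥ κ = ‖S‖² + σ² ‖w‖²`, and expanding `‖S - u‖²` yields
`‖S - u‖² + σ² ‖w‖² = ‖u‖² - w ⬝ᵥ κ = σ*²`.
-/

namespace Matrix

variable {E : Type*} [NormedAddCommGroup E] [InnerProductSpace ℝ E]
  {ι : Type*} [Fintype ι]

theorem posDef_gram_add_smul_one [DecidableEq ι] (v : ι → E) {c : ℝ} (hc : 0 < c) :
    (gram ℝ v + c • (1 : Matrix ι ι ℝ)).PosDef :=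
  PosDef.posSemidef_add (posSemidef_gram ℝ v) (PosDef.one.smul hc)

theorem dotProduct_inner_eq_inner_sum_smul (v : ι → E) (u : E) (w : ι → ℝ) :
    w ⬝ᵥ (fun i => ⟪v i, u⟫) = ⟪∑ i, w i • v i, u⟫ := by
  simp only [dotProduct, sum_inner, real_inner_smul_left]

theorem norm_sum_smul_sub_sq_add_eq [DecidableEq ι] (v : ι → E) (u : E) (c : ℝ) (w : ι → ℝ)
    (hw : (gram ℝ v + c • (1 : Matrix ι ι ℝ)) *ᵥ w = fun i => ⟪v i, u⟫) :
    ‖∑ i, w i • v i - u‖ ^ 2 + c * (w ⬝ᵥ w) = ⟪u, u⟫ - w ⬝ᵥ (fun i => ⟪v i, u⟫) := by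
  set S := ∑ i, w i • v i
  have h_cross : w ⬝ᵥ (fun i => ⟪v i, u⟫) = ⟪S, u⟫ := dotProduct_inner_eq_inner_sum_smul v u w
  have h_normal : w ⬝ᵥ (fun i => ⟪v i, u⟫) = ⟪S, S⟫ + c * (w ⬝ᵥ w) := by
    rw [← hw, add_mulVec, smul_mulVec, one_mulVec, dotProduct_add, dotProduct_smul,
      smul_eq_mul, ← star_trivial w, star_dotProduct_gram_mulVec, star_trivial]
  rw [norm_sub_sq_real, ← real_inner_self_eq_norm_sq, ← real_inner_self_eq_norm_sq]
  linarith

theorem norm_sum_smul_sub_le_sqrt [DecidableEq ι] (v : ι → E) (u : E) {c : ℝ} (hc : 0 ≤ c)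
    (w : ι → ℝ)
    (hw : (gram ℝ v + c • (1 : Matrix ι ι ℝ)) *ᵥ w = fun i => ⟪v i, u⟫) :
    ‖∑ i, w i • v i - u‖ ≤ Real.sqrt (⟪u, u⟫ - w ⬝ᵥ (fun i => ⟪v i, u⟫)) := by
  refine Real.le_sqrt_of_sq_le ?_
  rw [← norm_sum_smul_sub_sq_add_eq v u c w hw]
  have hww : 0 ≤ w ⬝ᵥ w := Finset.sum_nonneg fun i _ => mul_self_nonneg (w i)
  exact le_add_of_nonneg_right (mul_nonneg hc hww)

end Matrix

theorem stmt_2 {E : Type*} [NormedAddCommGroup E] [InnerProductSpace ℝ E]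
    {n : ℕ} (u : E) (u' : Fin n → E) (σ : ℝ) (hσ : 0 < σ)
    (K : Matrix (Fin n) (Fin n) ℝ) (hK : ∀ i j, K i j = ⟪u' i, u' j⟫)
    (κ : Fin n → ℝ) (hκ : ∀ i, κ i = ⟪u' i, u⟫)
    (w : Fin n → ℝ)
    (hw : w = (K + σ ^ 2 • (1 : Matrix (Fin n) (Fin n) ℝ))⁻¹ *ᵥ κ)
    (σstarSq : ℝ)
    (hσstar : σstarSq =
      ⟪u, u⟫ - κ ⬝ᵥ ((K + σ ^ 2 • (1 : Matrix (Fin n) (Fin n) ℝ))⁻¹ *ᵥ κ))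
    (f : E) (B : ℝ) (hf : ‖f‖ ≤ B) :
    |(∑ i, w i * ⟪f, u' i⟫) - ⟪f, u⟫| ≤ B * Real.sqrt σstarSq := by
  obtain rfl : K = gram ℝ u' := Matrix.ext fun i j => hK i j
  obtain rfl : κ = fun i => ⟪u' i, u⟫ := funext hκ
  have h_normal : (gram ℝ u' + σ ^ 2 • (1 : Matrix (Fin n) (Fin n) ℝ)) *ᵥ w =
      fun i => ⟪u' i, u⟫ := by
    rw [hw, mulVec_mulVec, mul_nonsing_inv _
      (posDef_gram_add_smul_one u' (pow_pos hσ 2)).det_pos.ne'.isUnit, one_mulVec]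
  have h_error : (∑ i, w i * ⟪f, u' i⟫) - ⟪f, u⟫ = ⟪f, ∑ i, w i • u' i - u⟫ := by
    simp only [inner_sub_right, inner_sum, real_inner_smul_right]
  rw [hσstar, ← hw, dotProduct_comm, h_error]
  calc |⟪f, ∑ i, w i • u' i - u⟫| ≤ ‖f‖ * ‖∑ i, w i • u' i - u‖ := abs_real_inner_le_norm _ _
    _ ≤ ‖f‖ * Real.sqrt (⟪u, u⟫ - w ⬝ᵥ fun i => ⟪u' i, u⟫) :=
      mul_le_mul_of_nonneg_left
        (norm_sum_smul_sub_le_sqrt u' u (sq_nonneg σ) w h_normal) (norm_nonneg f)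
    _ ≤ B * Real.sqrt (⟪u, u⟫ - w ⬝ᵥ fun i => ⟪u' i, u⟫) :=
      mul_le_mul_of_nonneg_right hf (Real.sqrt_nonneg _)
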